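/- arXiv:1810.02538 — 2 statements merged into one kernel-verified Lean document; each statement's English description precedes it below -/
import Mathlib

section
/- Let μ, ν be compactly supported probability measures on ℝ with subordination function ω satisfying G_{μ⊞ν}(z) = G_μ(ω(z)) on ℂ⁺, continuously extended to the real line. Then for every real z > r(μ⊞ν), the imaginary part of ω(z) is zero. -/
/-!
Let `b = r(μ ⊞ ν)` and `x > b`. As `z → x` in the closed upper half plane, `Im G_{μ⊞ν}(z) → 0`,
since `|Im (z - t)⁻¹| ≤ Im z / (x - b)²` for `t ≤ b`. By subordination and continuity of `ω`,
the same limit equals `Im G_μ(ω(x))`. If `Im ω(x) > 0`, this is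
`-Im ω(x) ∫ dμ(t) / |t - ω(x)|² < 0`, a contradiction; and `Im ω(x) ≥ 0` as a limit of points
of the upper half plane.
-/

open MeasureTheory Filter Topology

noncomputable def rEdge (μ : Measure ℝ) : ℝ := sInf {r : ℝ | μ (Set.Ioi r) = 0}

def suppBdd (μ : Measure ℝ) : Prop := ∃ R : ℝ, μ {y : ℝ | R < |y|} = 0

noncomputable def stG (μ : Measure ℝ) (l : ℝ) : ℝ := ∫ y, (l - y)⁻¹ ∂μ

/-- Complex Stieltjes transform G_μ(z) = ∫ 1/(z−t) dμ(t). -/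
noncomputable def stGC (μ : Measure ℝ) (z : ℂ) : ℂ := ∫ t, (z - (t : ℂ))⁻¹ ∂μ

def IsFreeConv (μab μ ν : Measure ℝ) : Prop :=
  ∃ (K Ka Kb : ℝ → ℝ) (ε : ℝ), 0 < ε ∧
    ∀ u ∈ Set.Ioo (0 : ℝ) ε,
      (rEdge μab < K u ∧ stG μab (K u) = u) ∧
      (rEdge μ < Ka u ∧ stG μ (Ka u) = u) ∧
      (rEdge ν < Kb u ∧ stG ν (Kb u) = u) ∧
      K u = Ka u + Kb u - 1 / u

open Complex

lemma measure_Ioi_rEdge {μ : Measure ℝ} (h : ∃ r, μ (Set.Ioi r) = 0) :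
    μ (Set.Ioi (rEdge μ)) = 0 := by
  have hnull : ∀ ε > 0, μ (Set.Ioi (rEdge μ + ε)) = 0 := fun ε hε => by
    obtain ⟨r, hr, hlt⟩ := exists_lt_of_csInf_lt h (lt_add_of_pos_right (rEdge μ) hε)
    exact measure_mono_null (Set.Ioi_subset_Ioi hlt.le) hr
  have hcover : Set.Ioi (rEdge μ) ⊆ ⋃ n : ℕ, Set.Ioi (rEdge μ + 1 / ((n : ℝ) + 1)) := by
    intro t ht
    obtain ⟨n, hn⟩ := exists_nat_one_div_lt (sub_pos.mpr ht : (0 : ℝ) < t - rEdge μ)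
    exact Set.mem_iUnion.mpr ⟨n, by simp only [Set.mem_Ioi]; linarith⟩
  exact measure_mono_null hcover (measure_iUnion_null fun n => hnull _ (by positivity))

lemma suppBdd.exists_measure_Ioi_eq_zero {μ : Measure ℝ} (h : suppBdd μ) :
    ∃ r, μ (Set.Ioi r) = 0 := by
  obtain ⟨R, hR⟩ := h
  exact ⟨R, measure_mono_null (fun y (hy : R < y) => hy.trans_le (le_abs_self y)) hR⟩

lemma im_inv_sub_ofReal (z : ℂ) (t : ℝ) :
    ((z - t)⁻¹).im = -(z.im / normSq (z - t)) := by
  simp [inv_im, neg_div]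

lemma norm_inv_sub_ofReal_le {z : ℂ} (hz : z.im ≠ 0) (t : ℝ) : ‖(z - t)⁻¹‖ ≤ |z.im|⁻¹ := by
  rw [norm_inv]
  exact inv_anti₀ (abs_pos.mpr hz) (by simpa using abs_im_le_norm (z - t))

lemma integrable_inv_sub_ofReal (μ : Measure ℝ) [IsFiniteMeasure μ] {z : ℂ} (hz : z.im ≠ 0) :
    Integrable (fun t : ℝ => (z - t)⁻¹) μ := by
  have hne : ∀ t : ℝ, z - t ≠ 0 := fun t h => hz (by simpa using congrArg im h)
  refine Integrable.mono' (integrable_const |z.im|⁻¹) ?_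
    (ae_of_all _ fun t => norm_inv_sub_ofReal_le hz t)
  exact ((continuous_const.sub continuous_ofReal).inv₀ hne).aestronglyMeasurable

lemma im_stGC {μ : Measure ℝ} {z : ℂ} (hint : Integrable (fun t : ℝ => (z - t)⁻¹) μ) :
    (stGC μ z).im = ∫ t, ((z - t)⁻¹).im ∂μ :=
  (integral_im hint).symm

lemma im_stGC_neg (μ : Measure ℝ) [IsFiniteMeasure μ] [NeZero μ] {w : ℂ} (hw : 0 < w.im) :
    (stGC μ w).im < 0 := by
  have hint := integrable_inv_sub_ofReal μ hw.ne'
  have hpos : ∀ t : ℝ, 0 < w.im / normSq (w - t) := fun t =>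
    div_pos hw (normSq_pos.mpr fun h => hw.ne' (by simpa using congrArg im h))
  have hkernel : 0 < ∫ t, w.im / normSq (w - t) ∂μ := by
    have hint' : Integrable (fun t : ℝ => w.im / normSq (w - t)) μ :=
      hint.im.neg.congr (ae_of_all _ fun t => by simp [neg_div])
    rw [integral_pos_iff_support_of_nonneg (fun t => (hpos t).le) hint',
      Function.support_eq_univ fun t => (hpos t).ne']
    exact pos_iff_ne_zero.mpr (Measure.measure_univ_ne_zero.mpr (NeZero.ne μ))
  rw [im_stGC hint]
  simpa only [im_inv_sub_ofReal, integral_neg] using neg_neg_of_pos hkernel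

lemma abs_im_stGC_le (μ : Measure ℝ) [IsFiniteMeasure μ] {b : ℝ} (hb : μ (Set.Ioi b) = 0)
    {z : ℂ} (hz : b < z.re) :
    |(stGC μ z).im| ≤ |z.im| / (z.re - b) ^ 2 * μ.real Set.univ := by
  by_cases hint : Integrable (fun t : ℝ => (z - t)⁻¹) μ
  swap
  · -- junk value: a non-integrable kernel gives `stGC μ z = 0`
    rw [stGC, integral_undef hint, zero_im, abs_zero]
    positivity
  rw [im_stGC hint, ← Real.norm_eq_abs]
  refine norm_integral_le_of_norm_le_const ?_
  filter_upwards [measure_eq_zero_iff_ae_notMem.mp hb] with t ht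
  have ht : t ≤ b := not_lt.mp ht
  have hgap : (z.re - b) ^ 2 ≤ normSq (z - t) := by
    rw [normSq_apply]
    simp only [sub_re, ofReal_re, sub_im, ofReal_im, sub_zero]
    nlinarith [mul_self_nonneg z.im]
  rw [im_inv_sub_ofReal, norm_neg, Real.norm_eq_abs, abs_div, abs_of_nonneg (normSq_nonneg _)]
  exact div_le_div_of_nonneg_left (abs_nonneg _) (by nlinarith) hgap

lemma tendsto_im_stGC_nhds_zero (μ : Measure ℝ) [IsFiniteMeasure μ] {b x : ℝ}
    (hb : μ (Set.Ioi b) = 0) (hx : b < x) :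
    Tendsto (fun z => (stGC μ z).im) (𝓝 (x : ℂ)) (𝓝 0) := by
  have hbound : Tendsto (fun z : ℂ => |z.im| / (z.re - b) ^ 2 * μ.real Set.univ)
      (𝓝 (x : ℂ)) (𝓝 0) := by
    have hcont : ContinuousAt (fun z : ℂ => |z.im| / (z.re - b) ^ 2 * μ.real Set.univ) x := by
      have : ((x : ℂ).re - b) ^ 2 ≠ 0 := by simp; linarith
      fun_prop (disch := exact this)
    simpa using hcont.tendsto
  have hright : ∀ᶠ z : ℂ in 𝓝 (x : ℂ), b < z.re :=
    (continuous_re.isOpen_preimage _ isOpen_Ioi).mem_nhds (by simpa using hx)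
  refine squeeze_zero_norm' ?_ hbound
  filter_upwards [hright] with z hz
  exact abs_im_stGC_le μ hb hz

lemma continuousAt_stGC (μ : Measure ℝ) [IsFiniteMeasure μ] {w : ℂ} (hw : w.im ≠ 0) :
    ContinuousAt (stGC μ) w := by
  have hr : 0 < |w.im| / 2 := half_pos (abs_pos.mpr hw)
  have hnear : ∀ᶠ ζ : ℂ in 𝓝 w, |w.im| / 2 < |ζ.im| :=
    continuousAt_const.eventually_lt continuous_im.abs.continuousAt
      (half_lt_self (abs_pos.mpr hw))
  refine continuousAt_of_dominated (bound := fun _ => (|w.im| / 2)⁻¹) ?_ ?_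
    (integrable_const _) (ae_of_all _ fun t => ?_)
  · filter_upwards [hnear] with ζ hζ
    exact (integrable_inv_sub_ofReal μ (abs_pos.mp (hr.trans hζ))).aestronglyMeasurable
  · filter_upwards [hnear] with ζ hζ
    exact ae_of_all _ fun t =>
      (norm_inv_sub_ofReal_le (abs_pos.mp (hr.trans hζ)) t).trans (inv_anti₀ hr hζ.le)
  · exact (continuousAt_id.sub continuousAt_const).inv₀ fun h => hw (by simpa using congrArg im h)

theorem stmt11_general (μ μab : Measure ℝ) [IsProbabilityMeasure μ]
    [IsProbabilityMeasure μab]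
    (hcab : suppBdd μab)
    (ω : ℂ → ℂ)
    (hωmap : ∀ z : ℂ, 0 < z.im → 0 < (ω z).im)
    (hωcont : ContinuousOn ω {z : ℂ | 0 ≤ z.im})
    (hsub : ∀ z : ℂ, 0 < z.im → stGC μab z = stGC μ (ω z)) :
    ∀ x : ℝ, rEdge μab < x → (ω ((x : ℝ) : ℂ)).im = 0 := by
  intro x hx
  set L : Filter ℂ := 𝓝[{z : ℂ | 0 < z.im}] (x : ℂ)
  have : L.NeBot := mem_closure_iff_nhdsWithin_neBot.mp (by simp)
  have hup : ∀ᶠ z in L, 0 < z.im := self_mem_nhdsWithin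
  have hωL : Tendsto ω L (𝓝 (ω x)) :=
    ((hωcont x (by simp)).mono fun z (hz : 0 < z.im) => hz.le).tendsto
  have hwim : 0 ≤ (ω x).im :=
    ge_of_tendsto (continuous_im.continuousAt.tendsto.comp hωL)
      (hup.mono fun z hz => (hωmap z hz).le)
  by_contra him
  have hw : 0 < (ω x).im := hwim.lt_of_ne' him
  have hlim : Tendsto (fun z => (stGC μab z).im) L (𝓝 (stGC μ (ω x)).im) := by
    refine (continuous_im.continuousAt.tendsto.comp
      ((continuousAt_stGC μ hw.ne').tendsto.comp hωL)).congr' ?_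
    filter_upwards [hup] with z hz
    simp [hsub z hz]
  have hzero : Tendsto (fun z => (stGC μab z).im) L (𝓝 0) :=
    (tendsto_im_stGC_nhds_zero μab (measure_Ioi_rEdge hcab.exists_measure_Ioi_eq_zero)
      hx).mono_left nhdsWithin_le_nhds
  exact (im_stGC_neg μ hw).ne (tendsto_nhds_unique hlim hzero)

/-- If neither μ nor ν is a point mass and ω is the subordination function
    (analytic on ℂ⁺, mapping ℂ⁺ to ℂ⁺, continuous up to the boundary, with
    G_{μ⊞ν} = G_μ ∘ ω on ℂ⁺), then Im ω(z) = 0 for every real z > r(μ⊞ν). -/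
theorem stmt11 (μ ν μab : Measure ℝ) [IsProbabilityMeasure μ]
    [IsProbabilityMeasure ν] [IsProbabilityMeasure μab]
    (hcμ : suppBdd μ) (hcν : suppBdd ν) (hcab : suppBdd μab)
    (hfc : IsFreeConv μab μ ν)
    (hμnd : ¬ ∃ c : ℝ, μ = Measure.dirac c)
    (hνnd : ¬ ∃ c : ℝ, ν = Measure.dirac c)
    (ω : ℂ → ℂ)
    (hωan : AnalyticOn ℂ ω {z : ℂ | 0 < z.im})
    (hωmap : ∀ z : ℂ, 0 < z.im → 0 < (ω z).im)
    (hωcont : ContinuousOn ω {z : ℂ | 0 ≤ z.im})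
    (hsub : ∀ z : ℂ, 0 < z.im → stGC μab z = stGC μ (ω z)) :
    ∀ x : ℝ, rEdge μab < x → (ω ((x : ℝ) : ℂ)).im = 0 :=
  stmt11_general μ μab hcab ω hωmap hωcont hsub
end

section
/- With the definitions of J^β_μ and I^β(θ,x) as in the paper, fix x ≥ 0. There exist constants c, c′ ∈ ℝ (depending on μ_a, μ_b, ρ_a, ρ_b, x but not θ) such that for all sufficiently large θ, θ(x − ρ_a − ρ_b) − (β/2)log θ + c ≤ I^β(θ, x) ≤ θ(x − ρ_a − ρ_b) + β log θ + c′. Consequently, if x > ρ_a + ρ_b, then sup_{θ≥0} I^β(θ,x) = +∞. -/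
open MeasureTheory Filter Topology

noncomputable def GE (μ : Measure ℝ) (l : ℝ) : ENNReal :=
  ∫⁻ y, ENNReal.ofReal ((l - y)⁻¹) ∂μ

noncomputable def Jfun (β : ℝ) (μ : Measure ℝ) (R : ℝ → ℝ) (θ ρ : ℝ) : ℝ :=
  if ENNReal.ofReal (2 * θ / β) ≤ GE μ ρ then
    (β / 2) * ∫ u in (0 : ℝ)..(2 * θ / β), R u
  else
    θ * ρ - (β / 2) * Real.log θ - (β / 2) * (∫ y, Real.log (ρ - y) ∂μ)
      + (β / 2) * (Real.log (β / 2) - 1)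

/-! Each `J^β_μ(θ, ρ)` is `θρ − (β/2) log θ + O(1)` from below and `θρ + O(1)` from above.
If `G_μ(ρ) < ∞`, the second branch of the definition applies as soon as `2θ/β > G_μ(ρ)` and is
exactly of this form (with `log θ ≥ 0` for the upper bound). If `G_μ(ρ) = ∞`, then `ρ = r(μ)` and
`J` is `(β/2) ∫₀^{2θ/β} R_μ`. Comparing `G_μ(R_μ(u) + 1/u) = u` with
`1/(l − L) ≤ G_μ(l) ≤ 1/(l − r(μ))`, where `L` bounds the support from below, gives
`L ≤ R_μ(u) ≤ r(μ)`; together with `R_μ(u) > r(μ) − 1/u`, integrating over `(0, 1]` and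
`[1, 2θ/β]` yields the two bounds.
Subtracting the estimates for `μ_a` and `μ_b` from the one for `μ_a ⊞ μ_b` gives the claim;
when `x > ρ_a + ρ_b` the linear term beats the logarithm. -/

open Set

namespace suppBdd

variable {μ : Measure ℝ}

theorem exists_ae_abs_le (hc : suppBdd μ) : ∃ R : ℝ, ∀ᵐ y ∂μ, |y| ≤ R := by
  obtain ⟨R, hR⟩ := hc
  exact ⟨R, (measure_eq_zero_iff_ae_notMem.mp hR).mono fun y hy => not_lt.mp hy⟩

theorem ae_le_rEdge (hc : suppBdd μ) : ∀ᵐ y ∂μ, y ≤ rEdge μ := by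
  obtain ⟨R, hR⟩ := hc.exists_ae_abs_le
  rw [show rEdge μ = essSup id μ from (essSup_eq_sInf μ id).symm]
  exact ae_le_essSup ⟨R, eventually_map.mpr (hR.mono fun y hy => (le_abs_self y).trans hy)⟩

theorem exists_ae_mem_Icc [NeZero μ] (hc : suppBdd μ) :
    ∃ L ≤ rEdge μ, ∀ᵐ y ∂μ, y ∈ Icc L (rEdge μ) := by
  obtain ⟨R, hR⟩ := hc.exists_ae_abs_le
  have h : ∀ᵐ y ∂μ, y ∈ Icc (-R) (rEdge μ) :=
    (hR.mono fun y hy => neg_le_of_abs_le hy).and hc.ae_le_rEdge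
  obtain ⟨y, hy⟩ := h.exists
  exact ⟨-R, hy.1.trans hy.2, h⟩

end suppBdd

section Stieltjes

variable {μ : Measure ℝ} {l : ℝ}

theorem integrable_inv_sub [IsFiniteMeasure μ] (hc : suppBdd μ) (hl : rEdge μ < l) :
    Integrable (fun y => (l - y)⁻¹) μ :=
  .of_bound (measurable_const.sub measurable_id).inv.aestronglyMeasurable (l - rEdge μ)⁻¹ <|
    hc.ae_le_rEdge.mono fun y hy => by
      rw [Real.norm_of_nonneg (inv_nonneg.mpr (by linarith))]
      exact inv_anti₀ (by linarith) (by linarith)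

theorem GE_ne_top [IsFiniteMeasure μ] (hc : suppBdd μ) (hl : rEdge μ < l) : GE μ l ≠ ⊤ :=
  (integrable_inv_sub hc hl).lintegral_lt_top.ne

variable [IsProbabilityMeasure μ]

theorem stG_le_inv_sub_rEdge (hc : suppBdd μ) (hl : rEdge μ < l) :
    stG μ l ≤ (l - rEdge μ)⁻¹ := by
  simpa [stG] using integral_mono_ae (integrable_inv_sub hc hl) (integrable_const _)
    (hc.ae_le_rEdge.mono fun y hy => inv_anti₀ (by linarith) (by linarith))

theorem inv_sub_le_stG {L : ℝ} (hc : suppBdd μ) (hl : rEdge μ < l) (hL : ∀ᵐ y ∂μ, L ≤ y) :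
    (l - L)⁻¹ ≤ stG μ l := by
  simpa [stG] using integral_mono_ae (integrable_const _) (integrable_inv_sub hc hl)
    ((hL.and hc.ae_le_rEdge).mono fun y hy => inv_anti₀ (by linarith [hy.2]) (by linarith [hy.1]))

theorem stG_antitoneOn (hc : suppBdd μ) : AntitoneOn (stG μ) (Ioi (rEdge μ)) :=
  fun _ hl₁ _ hl₂ h => integral_mono_ae (integrable_inv_sub hc hl₂) (integrable_inv_sub hc hl₁)
    (hc.ae_le_rEdge.mono fun y hy => inv_anti₀ (by linarith [mem_Ioi.mp hl₁]) (by linarith))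

end Stieltjes

-- The case `G_μ(r(μ)) = ∞`, where `u ↦ R u + 1/u` inverts `G_μ` on all of `(0, ∞)`.
def IsRTransform (μ : Measure ℝ) (R : ℝ → ℝ) : Prop :=
  ∀ u : ℝ, 0 < u → rEdge μ < R u + 1 / u ∧ stG μ (R u + 1 / u) = u

namespace IsRTransform

variable {μ : Measure ℝ} [IsProbabilityMeasure μ] {R : ℝ → ℝ}

theorem mem_Icc (hR : IsRTransform μ R) (hc : suppBdd μ) {L : ℝ} (hLE : L ≤ rEdge μ)
    (hL : ∀ᵐ y ∂μ, L ≤ y) {u : ℝ} (hu : 0 < u) : R u ∈ Icc L (rEdge μ) := by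
  obtain ⟨hl, hG⟩ := hR u hu
  rw [one_div] at hl hG
  have hupper : u ≤ (R u + u⁻¹ - rEdge μ)⁻¹ :=
    hG.symm.trans_le (stG_le_inv_sub_rEdge hc hl)
  have hlower : (R u + u⁻¹ - L)⁻¹ ≤ u := (inv_sub_le_stG hc hl hL).trans_eq hG
  constructor
  · linarith [(inv_le_comm₀ (by linarith) hu).mp hlower]
  · linarith [(le_inv_comm₀ hu (by linarith)).mp hupper]

theorem antitoneOn_add_one_div (hR : IsRTransform μ R) (hc : suppBdd μ) :
    AntitoneOn (fun u => R u + 1 / u) (Ioi 0) := by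
  intro u hu v hv huv
  by_contra! hlt
  have hvu : v ≤ u := by
    simpa only [(hR u hu).2, (hR v hv).2] using
      stG_antitoneOn hc (hR u hu).1 ((hR u hu).1.trans hlt) hlt.le
  exact hlt.ne (by rw [le_antisymm huv hvu])

end IsRTransform

namespace IsRTransform

variable {μ : Measure ℝ} [IsProbabilityMeasure μ] {R : ℝ → ℝ}

theorem intervalIntegrable (hR : IsRTransform μ R) (hc : suppBdd μ) {T : ℝ} (hT : 0 ≤ T) :
    IntervalIntegrable R volume 0 T := by
  obtain ⟨L, hLE, hL⟩ := hc.exists_ae_mem_Icc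
  have hmeas : AEMeasurable (fun u => R u + 1 / u) (volume.restrict (Ioc 0 T)) :=
    aemeasurable_restrict_of_antitoneOn measurableSet_Ioc
      ((hR.antitoneOn_add_one_div hc).mono Ioc_subset_Ioi_self)
  have hR_eq : (fun u => R u + 1 / u - 1 / u) = R := funext fun u => add_sub_cancel_right _ _
  rw [intervalIntegrable_iff_integrableOn_Ioc_of_le hT]
  refine .of_bound measure_Ioc_lt_top
    (hR_eq ▸ (hmeas.sub (measurable_const.div measurable_id).aemeasurable).aestronglyMeasurable)
    (max |L| |rEdge μ|) ?_
  filter_upwards [ae_restrict_mem measurableSet_Ioc] with u hu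
  obtain ⟨h₁, h₂⟩ := hR.mem_Icc hc hLE (hL.mono fun _ hy => hy.1) hu.1
  exact abs_le_max_abs_abs h₁ h₂

theorem integral_mem_Icc (hR : IsRTransform μ R) (hc : suppBdd μ) {L : ℝ} (hLE : L ≤ rEdge μ)
    (hL : ∀ᵐ y ∂μ, L ≤ y) {T : ℝ} (hT : 1 ≤ T) :
    ∫ u in (0 : ℝ)..T, R u ∈ Icc (rEdge μ * T - Real.log T + (L - rEdge μ)) (rEdge μ * T) := by
  have hT₀ : 0 < T := one_pos.trans_le hT
  have hint : ∀ {a b : ℝ}, 0 ≤ a → a ≤ b → IntervalIntegrable R volume a b := fun ha hab =>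
    (hR.intervalIntegrable hc (ha.trans hab)).mono_set (uIcc_subset_uIcc (mem_uIcc_of_le ha hab) right_mem_uIcc)
  constructor
  · have h₀₁ : ∫ u in (0 : ℝ)..1, L ≤ ∫ u in (0 : ℝ)..1, R u :=
      intervalIntegral.integral_mono_on_of_le_Ioo zero_le_one intervalIntegrable_const
        (hint le_rfl zero_le_one) fun u hu => (hR.mem_Icc hc hLE hL hu.1).1
    have hinv : IntervalIntegrable (fun u : ℝ => u⁻¹) volume 1 T :=
      intervalIntegral.intervalIntegrable_inv
        (fun u hu => (zero_lt_one.trans_le (by simpa [hT] using hu.1)).ne') continuousOn_id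
    have h₁T : ∫ u in (1 : ℝ)..T, (rEdge μ - u⁻¹) ≤ ∫ u in (1 : ℝ)..T, R u :=
      intervalIntegral.integral_mono_on_of_le_Ioo hT (intervalIntegrable_const.sub hinv)
        (hint zero_le_one hT) fun u hu => by
          have := (hR u (zero_lt_one.trans hu.1)).1
          rw [one_div] at this
          linarith
    rw [intervalIntegral.integral_sub intervalIntegrable_const hinv,
      integral_inv_of_pos one_pos hT₀, div_one, intervalIntegral.integral_const,
      smul_eq_mul] at h₁T
    rw [intervalIntegral.integral_const, smul_eq_mul, sub_zero, one_mul] at h₀₁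
    rw [← intervalIntegral.integral_add_adjacent_intervals (hint le_rfl zero_le_one)
      (hint zero_le_one hT)]
    linarith
  · have := intervalIntegral.integral_mono_on_of_le_Ioo hT₀.le (hint le_rfl hT₀.le)
      intervalIntegrable_const fun u hu => (hR.mem_Icc hc hLE hL hu.1).2
    rwa [intervalIntegral.integral_const, smul_eq_mul, sub_zero, mul_comm] at this

end IsRTransform

section Jfun

variable {β : ℝ} {μ : Measure ℝ} {R : ℝ → ℝ} {ρ : ℝ}

theorem eventually_Jfun_eq_of_GE_ne_top (hβ : 0 < β) (hG : GE μ ρ ≠ ⊤) :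
    ∀ᶠ θ in atTop, Jfun β μ R θ ρ = θ * ρ - (β / 2) * Real.log θ
      - (β / 2) * (∫ y, Real.log (ρ - y) ∂μ) + (β / 2) * (Real.log (β / 2) - 1) := by
  filter_upwards [eventually_gt_atTop ((β / 2) * (GE μ ρ).toReal)] with θ hθ
  rw [Jfun, if_neg]
  rw [not_le, ENNReal.lt_ofReal_iff_toReal_lt hG, lt_div_iff₀ hβ]
  linarith

theorem Jfun_eq_integral_of_GE_eq_top (hG : GE μ ρ = ⊤) (θ : ℝ) :
    Jfun β μ R θ ρ = (β / 2) * ∫ u in (0 : ℝ)..(2 * θ / β), R u := by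
  rw [Jfun, if_pos (hG ▸ le_top)]

theorem exists_eventually_Jfun_bounds [IsProbabilityMeasure μ] (hβ : 0 < β) (hc : suppBdd μ)
    (hρ : rEdge μ ≤ ρ)
    (hR : ∀ u : ℝ, 0 < u → ENNReal.ofReal u < GE μ (rEdge μ) →
      rEdge μ < R u + 1 / u ∧ stG μ (R u + 1 / u) = u) :
    ∃ C₁ C₂ : ℝ, ∀ᶠ θ in atTop,
      θ * ρ - (β / 2) * Real.log θ + C₁ ≤ Jfun β μ R θ ρ ∧ Jfun β μ R θ ρ ≤ θ * ρ + C₂ := by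
  by_cases hG : GE μ ρ = ⊤
  · have hρE : ρ = rEdge μ :=
      hρ.eq_or_lt.elim Eq.symm fun h => absurd hG (GE_ne_top hc h)
    subst hρE
    have hRT : IsRTransform μ R := fun u hu => hR u hu (hG ▸ ENNReal.ofReal_lt_top)
    obtain ⟨L, hLE, hL⟩ := hc.exists_ae_mem_Icc
    refine ⟨(β / 2) * (L - rEdge μ - Real.log (2 / β)), 0, ?_⟩
    filter_upwards [eventually_ge_atTop (β / 2)] with θ hθ
    have hT : 1 ≤ 2 * θ / β := by rw [le_div_iff₀ hβ]; linarith
    have hlog : Real.log (2 * θ / β) = Real.log θ + Real.log (2 / β) := by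
      rw [show 2 * θ / β = θ * (2 / β) by ring, Real.log_mul (by linarith) (by positivity)]
    obtain ⟨hlow, hupp⟩ := hRT.integral_mem_Icc hc hLE (hL.mono fun _ hy => hy.1) hT
    rw [hlog] at hlow
    rw [Jfun_eq_integral_of_GE_eq_top hG]
    constructor
    · have := mul_le_mul_of_nonneg_left hlow (by positivity : (0 : ℝ) ≤ β / 2)
      field_simp at this ⊢
      linarith
    · have := mul_le_mul_of_nonneg_left hupp (by positivity : (0 : ℝ) ≤ β / 2)
      field_simp at this ⊢
      linarith
  · refine ⟨-(β / 2) * (∫ y, Real.log (ρ - y) ∂μ) + (β / 2) * (Real.log (β / 2) - 1),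
      -(β / 2) * (∫ y, Real.log (ρ - y) ∂μ) + (β / 2) * (Real.log (β / 2) - 1), ?_⟩
    filter_upwards [eventually_Jfun_eq_of_GE_ne_top hβ hG, eventually_ge_atTop 1] with θ hJ hθ
    have := Real.log_nonneg hθ
    rw [hJ]
    constructor <;> nlinarith

end Jfun

theorem tendsto_mul_sub_mul_log_atTop {d : ℝ} (hd : 0 < d) (b : ℝ) :
    Tendsto (fun θ => θ * d - b * Real.log θ) atTop atTop := by
  have hsmall := (Real.isLittleO_log_id_atTop.const_mul_left b).bound (half_pos hd)
  refine tendsto_atTop_mono' atTop ?_ (tendsto_id.atTop_mul_const (half_pos hd))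
  filter_upwards [hsmall, eventually_ge_atTop 0] with θ hθ hθ₀
  rw [Real.norm_eq_abs, Real.norm_eq_abs, id, abs_of_nonneg hθ₀] at hθ
  have := le_abs_self (b * Real.log θ)
  simp only [id]
  nlinarith

theorem stmt15_general (β : ℝ) (hβ : β = 1 ∨ β = 2)
    (μa μb μab : Measure ℝ) [IsProbabilityMeasure μa] [IsProbabilityMeasure μb]
    [IsProbabilityMeasure μab]
    (hca : suppBdd μa) (hcb : suppBdd μb) (hcab : suppBdd μab)
    (ρa ρb x : ℝ) (hρa : rEdge μa ≤ ρa) (hρb : rEdge μb ≤ ρb)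
    (hx : rEdge μab ≤ x)
    (Ra Rb Rab : ℝ → ℝ)
    (hRa : ∀ u : ℝ, 0 < u → ENNReal.ofReal u < GE μa (rEdge μa) →
      rEdge μa < Ra u + 1 / u ∧ stG μa (Ra u + 1 / u) = u)
    (hRb : ∀ u : ℝ, 0 < u → ENNReal.ofReal u < GE μb (rEdge μb) →
      rEdge μb < Rb u + 1 / u ∧ stG μb (Rb u + 1 / u) = u)
    (hRab : ∀ u : ℝ, 0 < u → ENNReal.ofReal u < GE μab (rEdge μab) →
      rEdge μab < Rab u + 1 / u ∧ stG μab (Rab u + 1 / u) = u) :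
    (∃ c c' θ₀ : ℝ, ∀ θ : ℝ, θ₀ ≤ θ →
        θ * (x - ρa - ρb) - (β / 2) * Real.log θ + c ≤
            Jfun β μab Rab θ x - Jfun β μa Ra θ ρa - Jfun β μb Rb θ ρb ∧
          Jfun β μab Rab θ x - Jfun β μa Ra θ ρa - Jfun β μb Rb θ ρb ≤
            θ * (x - ρa - ρb) + β * Real.log θ + c') ∧
      (ρa + ρb < x → ∀ M : ℝ, ∃ θ : ℝ, 0 ≤ θ ∧
        M < Jfun β μab Rab θ x - Jfun β μa Ra θ ρa - Jfun β μb Rb θ ρb) := by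
  have hβ₀ : 0 < β := by rcases hβ with rfl | rfl <;> norm_num
  obtain ⟨C₁a, C₂a, ha⟩ := exists_eventually_Jfun_bounds hβ₀ hca hρa hRa
  obtain ⟨C₁b, C₂b, hb⟩ := exists_eventually_Jfun_bounds hβ₀ hcb hρb hRb
  obtain ⟨C₁, C₂, hab⟩ := exists_eventually_Jfun_bounds hβ₀ hcab hx hRab
  have hI : ∀ᶠ θ in atTop,
      θ * (x - ρa - ρb) - (β / 2) * Real.log θ + (C₁ - C₂a - C₂b) ≤
          Jfun β μab Rab θ x - Jfun β μa Ra θ ρa - Jfun β μb Rb θ ρb ∧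
        Jfun β μab Rab θ x - Jfun β μa Ra θ ρa - Jfun β μb Rb θ ρb ≤
          θ * (x - ρa - ρb) + β * Real.log θ + (C₂ - C₁a - C₁b) := by
    filter_upwards [ha, hb, hab] with θ hθa hθb hθab
    constructor <;> linarith [hθa.1, hθa.2, hθb.1, hθb.2, hθab.1, hθab.2]
  refine ⟨⟨_, _, eventually_atTop.mp hI⟩, fun hxρ M => ?_⟩
  obtain ⟨θ, hθM, hθI, hθ₀⟩ :=
    (((tendsto_mul_sub_mul_log_atTop (by linarith : 0 < x - ρa - ρb) (β / 2)).eventually_gt_atTop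
      (M - (C₁ - C₂a - C₂b))).and (hI.and (eventually_ge_atTop 0))).exists
  exact ⟨θ, hθ₀, by linarith [hθI.1]⟩

/-- For fixed x ≥ 0 (with x ≥ r(μa⊞μb)), there are constants c, c′ such that for
    all large θ, θ(x−ρa−ρb) − (β/2)log θ + c ≤ I^β(θ,x) ≤ θ(x−ρa−ρb) + β log θ + c′.
    Consequently if x > ρa + ρb then sup_{θ≥0} I^β(θ,x) = +∞. -/
theorem stmt15 (β : ℝ) (hβ : β = 1 ∨ β = 2)
    (μa μb μab : Measure ℝ) [IsProbabilityMeasure μa] [IsProbabilityMeasure μb]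
    [IsProbabilityMeasure μab]
    (hca : suppBdd μa) (hcb : suppBdd μb) (hcab : suppBdd μab)
    (ρa ρb x : ℝ) (hρa : rEdge μa ≤ ρa) (hρb : rEdge μb ≤ ρb)
    (hx0 : 0 ≤ x) (hx : rEdge μab ≤ x)
    (Ra Rb Rab : ℝ → ℝ)
    (hRa : ∀ u : ℝ, 0 < u → ENNReal.ofReal u < GE μa (rEdge μa) →
      rEdge μa < Ra u + 1 / u ∧ stG μa (Ra u + 1 / u) = u)
    (hRb : ∀ u : ℝ, 0 < u → ENNReal.ofReal u < GE μb (rEdge μb) →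
      rEdge μb < Rb u + 1 / u ∧ stG μb (Rb u + 1 / u) = u)
    (hRab : ∀ u : ℝ, 0 < u → ENNReal.ofReal u < GE μab (rEdge μab) →
      rEdge μab < Rab u + 1 / u ∧ stG μab (Rab u + 1 / u) = u)
    (hadd : ∃ ε : ℝ, 0 < ε ∧ ∀ u ∈ Set.Ioo (0 : ℝ) ε, Rab u = Ra u + Rb u) :
    (∃ c c' θ₀ : ℝ, ∀ θ : ℝ, θ₀ ≤ θ →
        θ * (x - ρa - ρb) - (β / 2) * Real.log θ + c ≤
            Jfun β μab Rab θ x - Jfun β μa Ra θ ρa - Jfun β μb Rb θ ρb ∧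
          Jfun β μab Rab θ x - Jfun β μa Ra θ ρa - Jfun β μb Rb θ ρb ≤
            θ * (x - ρa - ρb) + β * Real.log θ + c') ∧
      (ρa + ρb < x → ∀ M : ℝ, ∃ θ : ℝ, 0 ≤ θ ∧
        M < Jfun β μab Rab θ x - Jfun β μa Ra θ ρa - Jfun β μb Rb θ ρb) :=
  stmt15_general β hβ μa μb μab hca hcb hcab ρa ρb x hρa hρb hx Ra Rb Rab hRa hRb hRab
end
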